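/- If a simplicial complex Δ has a face comparable (by inclusion) to every other nonempty face of Δ — equivalently, G(Δ) has a vertex adjacent to all other vertices — and Δ has at least one face of positive dimension, then Δ is a simplex (its faces are exactly all subsets of its vertex set). -/

import Mathlib

open Finset

theorem Finset.Nonempty.mem_of_singleton_subset_or_subset_singleton {α : Type*} {s : Finset α} {a : α}
    (hs : s.Nonempty) (h : {a} ⊆ s ∨ s ⊆ {a}) : a ∈ s := by
  rcases h with h | h
  · exact singleton_subset_iff.mp h
  · exact (hs.subset_singleton_iff.mp h).symm ▸ mem_singleton_self a

theorem Finset.eq_univ_of_comparable_with_singletons {α : Type*} [Fintype α] {s : Finset α}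
    (hs : s.Nonempty) (h : ∀ a : α, {a} ≠ s → {a} ⊆ s ∨ s ⊆ {a}) : s = univ :=
  eq_univ_of_forall fun a => hs.mem_of_singleton_subset_or_subset_singleton <| by
    by_cases ha : {a} = s
    · exact .inl ha.le
    · exact h a ha

theorem complex_with_dominating_face_is_simplex_general {V : Type*}
    [Fintype V]
    (Δ : Set (Finset V)) (hΔ : ∀ F ∈ Δ, ∀ E ⊆ F, E ∈ Δ)
    (hv : ∀ v : V, ({v} : Finset V) ∈ Δ)
    (hdom : ∃ A ∈ Δ, A ≠ ∅ ∧ ∀ F ∈ Δ, F ≠ ∅ → F ≠ A → (F ⊆ A ∨ A ⊆ F)) :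
    ∀ F : Finset V, F ∈ Δ := by
  obtain ⟨A, hA, hA_ne, hA_dom⟩ := hdom
  have hA_univ : A = univ := eq_univ_of_comparable_with_singletons (nonempty_iff_ne_empty.mpr hA_ne)
    fun v hvA => hA_dom {v} (hv v) (singleton_ne_empty v) hvA
  exact fun F => hΔ A hA F (hA_univ ▸ subset_univ F)

/-- If a simplicial complex `Δ` (on vertex set `V`, all singletons being faces)
has a nonempty face comparable to every other nonempty face, and `Δ` has a face
of positive dimension, then `Δ` is a simplex: every subset of `V` is a face. -/
theorem complex_with_dominating_face_is_simplex {V : Type*}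
    [DecidableEq V] [Fintype V]
    (Δ : Set (Finset V)) (hΔ : ∀ F ∈ Δ, ∀ E ⊆ F, E ∈ Δ)
    (hv : ∀ v : V, ({v} : Finset V) ∈ Δ)
    (hdom : ∃ A ∈ Δ, A ≠ ∅ ∧ ∀ F ∈ Δ, F ≠ ∅ → F ≠ A → (F ⊆ A ∨ A ⊆ F))
    (hpos : ∃ F ∈ Δ, 2 ≤ F.card) :
    ∀ F : Finset V, F ∈ Δ :=
  complex_with_dominating_face_is_simplex_general Δ hΔ hv hdom
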